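/- Let X and Y be simplicial complexes and let f : X → Y be a linear interpolation (a map determined by an interpolable vertex function extended affinely over each simplex). For each vertex v of X choose a vertex w_v in the support of f(v), and let h : X → Y be the linear interpolation of v ↦ w_v. Then h is well-defined (the vertex map is interpolable) and h is homotopic to f. -/
import Mathlib


namespace Stmt13

/-- An abstract simplicial complex on a vertex type `V`. -/
structure SComplex (V : Type*) where
  faces : Set (Finset V)
  nonempty_of_mem : ∀ {s}, s ∈ faces → s.Nonempty
  down_closed : ∀ {s t : Finset V}, s ∈ faces → t ⊆ s → t.Nonempty → t ∈ faces

variable {V W : Type*}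

/-- A point of the geometric realization of `K`: a convex combination `Σ p_v v`
supported on a face of `K`. -/
def IsPoint (K : SComplex V) (p : V → ℝ) : Prop :=
  (∀ v, 0 ≤ p v) ∧ ∃ s ∈ K.faces, (∀ v, v ∉ s → p v = 0) ∧ ∑ v ∈ s, p v = 1

/-- The geometric realization of `K`, topologized as a subspace of `V → ℝ`. -/
abbrev Realization (K : SComplex V) : Type _ := {p : V → ℝ // IsPoint K p}

/-- A vertex function `f0 : X⁰ → Y` is interpolable if for every simplex `σ` of `X`
there is a simplex `η` of `Y` containing `f0 v` (i.e. the support of `f0 v`) for every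
vertex `v` of `σ`. -/
def Interpolable (K : SComplex V) (L : SComplex W) (f0 : V → Realization L) : Prop :=
  ∀ s ∈ K.faces, ∃ t ∈ L.faces, ∀ v ∈ s, ∀ w, (f0 v).1 w ≠ 0 → w ∈ t

/-- `f` is the linear interpolation of the interpolable vertex function `f0`:
`f (Σ p_v v) = Σ p_v (f0 v)`. -/
def IsLinearInterp (K : SComplex V) (L : SComplex W)
    (f : Realization K → Realization L) (f0 : V → Realization L) : Prop :=
  Interpolable K L f0 ∧
    ∀ (p : Realization K) (w : W), (f p).1 w = ∑ᶠ v, p.1 v * (f0 v).1 w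

/-! ### Auxiliary lemmas -/

/-- If the support of a point is contained in a finset `t`, the coordinates sum to 1 over `t`. -/
lemma sum_face_eq_one {L : SComplex W} {q : W → ℝ} (hq : IsPoint L q) {t : Finset W}
    (hsupp : ∀ x, q x ≠ 0 → x ∈ t) : ∑ x ∈ t, q x = 1 := by
  classical
  obtain ⟨hnn, s, hs, hz, hsum⟩ := hq
  have h1 : ∑ x ∈ t, q x = ∑ x ∈ t ∪ s, q x :=
    Finset.sum_subset Finset.subset_union_left
      (fun x _ hx => by_contra fun hne => hx (hsupp x hne))
  have h2 : ∑ x ∈ s, q x = ∑ x ∈ t ∪ s, q x :=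
    Finset.sum_subset Finset.subset_union_right (fun x _ hx => hz x hx)
  rw [h1, ← h2, hsum]

lemma coord_le_one {L : SComplex W} {q : W → ℝ} (hq : IsPoint L q) (x : W) : q x ≤ 1 := by
  obtain ⟨hnn, s, hs, hz, hsum⟩ := hq
  by_cases hx : x ∈ s
  · calc q x ≤ ∑ y ∈ s, q y := Finset.single_le_sum (fun y _ => hnn y) hx
    _ = 1 := hsum
  · rw [hz x hx]; norm_num

lemma finsum_formula {K : SComplex V} (p : Realization K) {s : Finset V}
    (hz : ∀ v, v ∉ s → p.1 v = 0) (g : V → ℝ) :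
    ∑ᶠ v, p.1 v * g v = ∑ v ∈ s, p.1 v * g v := by
  refine finsum_eq_sum_of_support_subset _ fun v hv => ?_
  simp only [Function.mem_support] at hv
  by_contra hvs
  exact hv (by rw [hz v hvs, zero_mul])

/-- Linear interpolation of an interpolable vertex map yields a point. -/
lemma interp_isPoint {K : SComplex V} {L : SComplex W} {g0 : V → Realization L}
    (hg : Interpolable K L g0) (p : Realization K) :
    IsPoint L (fun x => ∑ᶠ v, p.1 v * (g0 v).1 x) := by
  classical
  obtain ⟨hnn, s, hs, hz, hsum⟩ := p.2
  obtain ⟨t, ht, htt⟩ := hg s hs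
  constructor
  · intro x
    show 0 ≤ ∑ᶠ v, p.1 v * (g0 v).1 x
    rw [finsum_formula p hz]
    exact Finset.sum_nonneg fun v _ => mul_nonneg (hnn v) ((g0 v).2.1 x)
  · refine ⟨t, ht, fun x hx => ?_, ?_⟩
    · show (∑ᶠ v, p.1 v * (g0 v).1 x) = 0
      rw [finsum_formula p hz]
      refine Finset.sum_eq_zero fun v hv => ?_
      by_cases hgv : (g0 v).1 x = 0
      · rw [hgv, mul_zero]
      · exact absurd (htt v hv x hgv) hx
    · have : ∀ x, (fun x => ∑ᶠ v, p.1 v * (g0 v).1 x) x = ∑ v ∈ s, p.1 v * (g0 v).1 x :=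
        fun x => finsum_formula p hz _
      calc ∑ x ∈ t, ∑ᶠ v, p.1 v * (g0 v).1 x = ∑ x ∈ t, ∑ v ∈ s, p.1 v * (g0 v).1 x := by
            exact Finset.sum_congr rfl fun x _ => finsum_formula p hz _
        _ = ∑ v ∈ s, ∑ x ∈ t, p.1 v * (g0 v).1 x := Finset.sum_comm
        _ = ∑ v ∈ s, p.1 v * ∑ x ∈ t, (g0 v).1 x := by
            exact Finset.sum_congr rfl fun v _ => (Finset.mul_sum _ _ _).symm
        _ = ∑ v ∈ s, p.1 v * 1 := by
            refine Finset.sum_congr rfl fun v hv => ?_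
            rw [sum_face_eq_one (g0 v).2 (fun x hx => htt v hv x hx)]
        _ = 1 := by simpa using hsum

/-- Continuity of a single coordinate of the linear interpolation. -/
lemma interp_coord_continuous {K : SComplex V} (c : V → ℝ) (hc0 : ∀ v, 0 ≤ c v)
    (hc1 : ∀ v, c v ≤ 1) :
    Continuous fun p : Realization K => ∑ᶠ v, p.1 v * c v := by
  classical
  rw [continuous_iff_continuousAt]
  intro p0
  obtain ⟨hnn0, s0, hs0, hz0, hsum0⟩ := p0.2
  have key : ∀ q : Realization K,
      (∑ v ∈ s0, q.1 v * c v) ≤ (∑ᶠ v, q.1 v * c v) ∧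
      (∑ᶠ v, q.1 v * c v) ≤ (∑ v ∈ s0, q.1 v * c v) + (1 - ∑ v ∈ s0, q.1 v) := by
    intro q
    obtain ⟨hnn, sq, hsq, hzq, hsumq⟩ := q.2
    have hform : ∑ᶠ v, q.1 v * c v = ∑ v ∈ s0 ∪ sq, q.1 v * c v := by
      rw [finsum_formula q hzq c]
      exact Finset.sum_subset Finset.subset_union_right (fun v _ hv => by rw [hzq v hv, zero_mul])
    have hsum_union : ∑ v ∈ s0 ∪ sq, q.1 v = 1 := by
      rw [← hsumq]
      exact (Finset.sum_subset Finset.subset_union_right (fun v _ hv => hzq v hv)).symm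
    have hsplit : ∑ v ∈ s0 ∪ sq, q.1 v * c v
        = ∑ v ∈ s0, q.1 v * c v + ∑ v ∈ sq \ s0, q.1 v * c v := by
      rw [← Finset.sum_union (Finset.disjoint_sdiff)]
      congr 1
      rw [Finset.union_sdiff_self_eq_union]
    have hsplit' : ∑ v ∈ s0 ∪ sq, q.1 v = ∑ v ∈ s0, q.1 v + ∑ v ∈ sq \ s0, q.1 v := by
      rw [← Finset.sum_union (Finset.disjoint_sdiff)]
      congr 1
      rw [Finset.union_sdiff_self_eq_union]
    constructor
    · rw [hform]
      exact Finset.sum_le_sum_of_subset_of_nonneg Finset.subset_union_left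
        (fun v _ _ => mul_nonneg (hnn v) (hc0 v))
    · rw [hform, hsplit]
      have htail : ∑ v ∈ sq \ s0, q.1 v * c v ≤ ∑ v ∈ sq \ s0, q.1 v :=
        Finset.sum_le_sum fun v _ => mul_le_of_le_one_right (hnn v) (hc1 v)
      have htail' : ∑ v ∈ sq \ s0, q.1 v = 1 - ∑ v ∈ s0, q.1 v := by
        have := hsplit'.symm.trans hsum_union
        linarith
      linarith [htail, htail'.le]
  have hg : Continuous fun q : Realization K => ∑ v ∈ s0, q.1 v * c v := by
    refine continuous_finset_sum _ fun v _ => ?_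
    exact ((continuous_apply v).comp continuous_subtype_val).mul continuous_const
  have hh : Continuous fun q : Realization K =>
      (∑ v ∈ s0, q.1 v * c v) + (1 - ∑ v ∈ s0, q.1 v) := by
    refine hg.add (continuous_const.sub ?_)
    exact continuous_finset_sum _ fun v _ => (continuous_apply v).comp continuous_subtype_val
  have hval : ∑ᶠ v, p0.1 v * c v = ∑ v ∈ s0, p0.1 v * c v := finsum_formula p0 hz0 c
  refine tendsto_of_tendsto_of_tendsto_of_le_of_le
    (f := fun q : Realization K => ∑ᶠ v, q.1 v * c v)
    (g := fun q : Realization K => ∑ v ∈ s0, q.1 v * c v)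
    (h := fun q : Realization K => (∑ v ∈ s0, q.1 v * c v) + (1 - ∑ v ∈ s0, q.1 v))
    ?_ ?_ (fun q => (key q).1) (fun q => (key q).2)
  · have e1 : (fun p : Realization K => ∑ᶠ v, p.1 v * c v) p0 = ∑ v ∈ s0, p0.1 v * c v := hval
    rw [e1]; exact hg.continuousAt
  · have e2 : (fun p : Realization K => ∑ᶠ v, p.1 v * c v) p0
        = (∑ v ∈ s0, p0.1 v * c v) + (1 - ∑ v ∈ s0, p0.1 v) := by
      show (∑ᶠ v, p0.1 v * c v) = _
      rw [hval, hsum0]; ring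
    rw [e2]; exact hh.continuousAt

/-- The linear interpolation as a continuous map. -/
noncomputable def interpMap {K : SComplex V} {L : SComplex W} {g0 : V → Realization L}
    (hg : Interpolable K L g0) : C(Realization K, Realization L) where
  toFun p := ⟨fun x => ∑ᶠ v, p.1 v * (g0 v).1 x, interp_isPoint hg p⟩
  continuous_toFun := by
    refine Continuous.subtype_mk (continuous_pi fun x => ?_) _
    exact interp_coord_continuous (fun v => (g0 v).1 x)
      (fun v => (g0 v).2.1 x) (fun v => coord_le_one (g0 v).2 x)

/-- Let `f : X → Y` be a linear interpolation with vertex function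
`f0`, and for each vertex `v` of `X` choose `w v ∈ supp (f0 v)`.  Then the vertex
function `v ↦ w v` (as a delta point) is interpolable, and its linear interpolation `h`
is homotopic to `f`. -/
theorem drop_to_vertex_homotopic (K : SComplex V) (L : SComplex W)
    (f : C(Realization K, Realization L)) (f0 : V → Realization L)
    (hf : IsLinearInterp K L f f0)
    (w : V → W) (hw : ∀ v, (f0 v).1 (w v) ≠ 0) :
    ∃ h0 : V → Realization L, (∀ v, (h0 v).1 (w v) = 1) ∧
      Interpolable K L h0 ∧
      ∃ h : C(Realization K, Realization L),
        IsLinearInterp K L h h0 ∧ f.Homotopic h := by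
  classical
  -- the delta points
  have hface : ∀ v, ({w v} : Finset W) ∈ L.faces := by
    intro v
    obtain ⟨hnn, t, ht, hz, hsum⟩ := (f0 v).2
    have hwt : w v ∈ t := by
      by_contra hc
      exact hw v (hz _ hc)
    exact L.down_closed ht (Finset.singleton_subset_iff.2 hwt) ⟨w v, Finset.mem_singleton_self _⟩
  set h0 : V → Realization L := fun v =>
    ⟨fun x => if x = w v then 1 else 0, by
      refine ⟨fun x => by positivity, {w v}, hface v, fun x hx => ?_, ?_⟩
      · have hxx : x ≠ w v := by simpa using hx
        simp [hxx]
      · simp⟩ with hh0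
  have h0one : ∀ v, (h0 v).1 (w v) = 1 := fun v => if_pos rfl
  have h0supp : ∀ v x, (h0 v).1 x ≠ 0 → x = w v := by
    intro v x hx
    by_contra hc
    exact hx (if_neg hc)
  have hinterp : Interpolable K L h0 := by
    intro s hs
    obtain ⟨t, ht, htt⟩ := hf.1 s hs
    refine ⟨t, ht, fun v hv x hx => ?_⟩
    rw [h0supp v x hx]
    exact htt v hv (w v) (hw v)
  refine ⟨h0, h0one, hinterp, interpMap hinterp, ⟨hinterp, fun p x => rfl⟩, ?_⟩
  -- the straight-line homotopy
  set h := interpMap hinterp with hh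
  -- common face for the supports of `f p` and `h p`
  have hcommon : ∀ p : Realization K, ∃ t ∈ L.faces,
      (∀ x, (f p).1 x ≠ 0 → x ∈ t) ∧ (∀ x, (h p).1 x ≠ 0 → x ∈ t) := by
    intro p
    obtain ⟨hnn, s, hs, hz, hsum⟩ := p.2
    obtain ⟨t, ht, htt⟩ := hf.1 s hs
    refine ⟨t, ht, fun x hx => ?_, fun x hx => ?_⟩
    · rw [hf.2 p x, finsum_formula p hz] at hx
      obtain ⟨v, hv, hvx⟩ := Finset.exists_ne_zero_of_sum_ne_zero hx
      exact htt v hv x (right_ne_zero_of_mul hvx)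
    · have hx' : (∑ᶠ v, p.1 v * (h0 v).1 x) ≠ 0 := hx
      rw [finsum_formula p hz] at hx'
      obtain ⟨v, hv, hvx⟩ := Finset.exists_ne_zero_of_sum_ne_zero hx'
      have := h0supp v x (right_ne_zero_of_mul hvx)
      rw [this]
      exact htt v hv (w v) (hw v)
  -- convex combination is a point
  have hcombo : ∀ (r : ℝ), 0 ≤ r → r ≤ 1 → ∀ p : Realization K,
      IsPoint L (fun x => (1 - r) * (f p).1 x + r * (h p).1 x) := by
    intro r hr0 hr1 p
    obtain ⟨t, ht, hft, hht⟩ := hcommon p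
    refine ⟨fun x => add_nonneg (mul_nonneg (by linarith) ((f p).2.1 x))
      (mul_nonneg hr0 ((h p).2.1 x)), t, ht, fun x hx => ?_, ?_⟩
    · show (1 - r) * (f p).1 x + r * (h p).1 x = 0
      have h1 : (f p).1 x = 0 := by
        by_contra hc; exact hx (hft x hc)
      have h2 : (h p).1 x = 0 := by
        by_contra hc; exact hx (hht x hc)
      rw [h1, h2, mul_zero, mul_zero, add_zero]
    · rw [Finset.sum_add_distrib, ← Finset.mul_sum, ← Finset.mul_sum,
        sum_face_eq_one (f p).2 hft, sum_face_eq_one (h p).2 hht]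
      ring
  refine ⟨⟨⟨fun tp => ⟨fun x => (1 - (tp.1 : ℝ)) * (f tp.2).1 x + (tp.1 : ℝ) * (h tp.2).1 x,
      hcombo _ tp.1.2.1 tp.1.2.2 tp.2⟩, ?_⟩, ?_, ?_⟩⟩
  · refine Continuous.subtype_mk (continuous_pi fun x => ?_) _
    have hcoe : Continuous fun tp : unitInterval × Realization K => (tp.1 : ℝ) :=
      continuous_subtype_val.comp continuous_fst
    have hfx : Continuous fun tp : unitInterval × Realization K => (f tp.2).1 x :=
      (continuous_apply x).comp (continuous_subtype_val.comp (f.continuous.comp continuous_snd))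
    have hhx : Continuous fun tp : unitInterval × Realization K => (h tp.2).1 x :=
      (continuous_apply x).comp (continuous_subtype_val.comp (h.continuous.comp continuous_snd))
    exact ((continuous_const.sub hcoe).mul hfx).add (hcoe.mul hhx)
  · intro p
    ext x
    simp
  · intro p
    ext x
    simp

end Stmt13
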